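/- arXiv:math/9904066 — 3 statements merged into one kernel-verified Lean document; each statement's English description precedes it below -/
import Mathlib

section
/- Let f, g : ℝ^d → ℝ be nonnegative integrable functions with ∫ f = ∫ g = 1, and let Λ ⊆ ℝ^d be countable such that both f + Λ and g + Λ are packings of ℝ^d. If ∑_{λ∈Λ} f(x−λ) = 1 for almost every x ∈ −{y : g(y) > 0}, then ∑_{λ∈Λ} g(y−λ) = 1 for almost every y ∈ −{x : f(x) > 0}. -/
/-!
Write `F = ∑_λ f(· - λ)` and `G = ∑_λ g(· - λ)`. Tonelli and translation invariance give the
exchange identity `∫ g(-x) F(x) dx = ∫ f(y) G(-y) dy`. The left side is `∫ g = 1`, because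
`F = 1` on `-supp g`, while `G ≤ 1` bounds the right side by `∫ f = 1`. Equality forces
`G(-y) = 1` for almost every `y` with `f(y) > 0`.
-/

open MeasureTheory Real Complex Filter Topology Metric Set Bornology ComplexConjugate
open scoped FourierTransform ENNReal RealInnerProductSpace ContDiff Classical Pointwise

noncomputable section

/-- The exponential `e_λ(x) = exp(2πi⟨λ,x⟩)`. -/
def expChar {d : ℕ} (l x : EuclideanSpace ℝ (Fin d)) : ℂ :=
  Complex.exp (((2 * Real.pi * ⟪l, x⟫ : ℝ) : ℂ) * Complex.I)

/-- The Fourier transform `𝓕f(ξ) = ∫ f(x) e^{-2πi⟨ξ,x⟩} dx` of a real-valued function. -/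
def ftR {d : ℕ} (f : EuclideanSpace ℝ (Fin d) → ℝ) : EuclideanSpace ℝ (Fin d) → ℂ :=
  𝓕 (fun x => (f x : ℂ))

/-- The Fourier transform of the indicator function of a set `Ω ⊆ ℝ^d`. -/
def ftInd {d : ℕ} (Ω : Set (EuclideanSpace ℝ (Fin d))) : EuclideanSpace ℝ (Fin d) → ℂ :=
  𝓕 (Ω.indicator fun _ => (1 : ℂ))

/-- `f + Λ` is a packing of `ℝ^d`: `∑_{λ∈Λ} f(x-λ) ≤ 1` for a.e. `x`. -/
def packs {d : ℕ} (f : EuclideanSpace ℝ (Fin d) → ℝ) (Λ : Set (EuclideanSpace ℝ (Fin d))) : Prop :=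
  ∀ᵐ x : EuclideanSpace ℝ (Fin d),
    ∑' l : Λ, ENNReal.ofReal (f (x - (l : EuclideanSpace ℝ (Fin d)))) ≤ 1

/-- `f + Λ` is a tiling of `ℝ^d` at level `ℓ`: `∑_{λ∈Λ} f(x-λ) = ℓ` for a.e. `x`. -/
def tilesAt {d : ℕ} (f : EuclideanSpace ℝ (Fin d) → ℝ) (Λ : Set (EuclideanSpace ℝ (Fin d)))
    (ℓ : ℝ) : Prop :=
  ∀ᵐ x : EuclideanSpace ℝ (Fin d),
    ∑' l : Λ, ENNReal.ofReal (f (x - (l : EuclideanSpace ℝ (Fin d)))) = ENNReal.ofReal ℓ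

theorem ae_eq_one_of_lintegral_le_lintegral_mul {α : Type*} [MeasurableSpace α] {μ : Measure α}
    {u w : α → ℝ≥0∞} (hu : AEMeasurable u μ) (hu_fin : ∫⁻ x, u x ∂μ ≠ (∞ : ℝ≥0∞))
    (hw : ∀ᵐ x ∂μ, w x ≤ 1) (hle : ∫⁻ x, u x ∂μ ≤ ∫⁻ x, u x * w x ∂μ) :
    ∀ᵐ x ∂μ, u x ≠ 0 → w x = 1 := by
  have hmul_le : ∀ᵐ x ∂μ, u x * w x ≤ u x := by
    filter_upwards [hw] with x hx
    exact mul_le_of_le_one_right' hx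
  have hmul_eq : (fun x => u x * w x) =ᵐ[μ] u :=
    ae_eq_of_ae_le_of_lintegral_le hmul_le
      (ne_top_of_le_ne_top hu_fin (lintegral_mono_ae hmul_le)) hu hle
  filter_upwards [hmul_eq, ae_lt_top' hu hu_fin] with x hx hx_fin hx0
  exact (ENNReal.mul_eq_left hx0 hx_fin.ne).mp hx

section Periodization

variable {G ι : Type*} [MeasurableSpace G] [AddCommGroup G] [MeasurableAdd G] [MeasurableNeg G]
  {μ : Measure G} [μ.IsAddRightInvariant] [μ.IsNegInvariant]

def periodization (t : ι → G) (u : G → ℝ≥0∞) (x : G) : ℝ≥0∞ :=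
  ∑' i, u (x - t i)

theorem lintegral_mul_periodization_comm [Countable ι] (t : ι → G) {u v : G → ℝ≥0∞}
    (hu : AEMeasurable u μ) (hv : AEMeasurable v μ) :
    ∫⁻ x, v (-x) * periodization t u x ∂μ = ∫⁻ y, u y * periodization t v (-y) ∂μ := by
  have hneg := (Measure.measurePreserving_neg μ).quasiMeasurePreserving
  have hsub (i : ι) := (measurePreserving_sub_right μ (t i)).quasiMeasurePreserving
  have translate (i : ι) :
      ∫⁻ x, v (-x) * u (x - t i) ∂μ = ∫⁻ y, u y * v (-y - t i) ∂μ := by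
    rw [← lintegral_add_right_eq_self _ (t i)]
    congr 1 with y
    rw [add_sub_cancel_right, neg_add', mul_comm]
  simp only [periodization, ← ENNReal.tsum_mul_left]
  rw [lintegral_tsum (f := fun i x => v (-x) * u (x - t i)) fun i =>
      (hv.comp_quasiMeasurePreserving hneg).mul (hu.comp_quasiMeasurePreserving (hsub i)),
    lintegral_tsum (f := fun i y => u y * v (-y - t i)) fun i =>
      hu.mul ((hv.comp_quasiMeasurePreserving (hsub i)).comp_quasiMeasurePreserving hneg)]
  exact tsum_congr translate

theorem ae_periodization_eq_one_of_neg_support [Countable ι] (t : ι → G) {u v : G → ℝ≥0∞}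
    (hu : AEMeasurable u μ) (hv : AEMeasurable v μ) (hu_fin : ∫⁻ x, u x ∂μ ≠ (∞ : ℝ≥0∞))
    (huv : ∫⁻ x, u x ∂μ ≤ ∫⁻ x, v x ∂μ) (hv_pack : ∀ᵐ y ∂μ, periodization t v y ≤ 1)
    (hu_tile : ∀ᵐ x ∂μ, v (-x) ≠ 0 → periodization t u x = 1) :
    ∀ᵐ y ∂μ, u (-y) ≠ 0 → periodization t v y = 1 := by
  have hneg := (Measure.measurePreserving_neg μ).quasiMeasurePreserving
  have hv_eq : ∀ᵐ x ∂μ, v (-x) * periodization t u x = v (-x) := by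
    filter_upwards [hu_tile] with x hx
    by_cases hvx : v (-x) = 0
    · rw [hvx, zero_mul]
    · rw [hx hvx, mul_one]
  have hexchange : ∫⁻ y, u y ∂μ ≤ ∫⁻ y, u y * periodization t v (-y) ∂μ :=
    calc ∫⁻ y, u y ∂μ ≤ ∫⁻ x, v x ∂μ := huv
      _ = ∫⁻ x, v (-x) ∂μ := (lintegral_neg_eq_self v).symm
      _ = ∫⁻ x, v (-x) * periodization t u x ∂μ := (lintegral_congr_ae hv_eq).symm
      _ = ∫⁻ y, u y * periodization t v (-y) ∂μ := lintegral_mul_periodization_comm t hu hv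
  have h := ae_eq_one_of_lintegral_le_lintegral_mul hu hu_fin (hneg.ae hv_pack) hexchange
  filter_upwards [hneg.ae h] with y hy
  simpa only [neg_neg] using hy

end Periodization

theorem tiles_neg_support_general {d : ℕ}
    (f g : EuclideanSpace ℝ (Fin d) → ℝ)
    (hf0 : ∀ x, 0 ≤ f x) (hg0 : ∀ x, 0 ≤ g x)
    (hfi : Integrable f) (hgi : Integrable g)
    (hf1 : (∫ x, f x) = 1) (hg1 : (∫ x, g x) = 1)
    (Λ : Set (EuclideanSpace ℝ (Fin d))) (hΛ : Λ.Countable)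
    (hpg : packs g Λ)
    (h : ∀ᵐ x : EuclideanSpace ℝ (Fin d),
      x ∈ -{y : EuclideanSpace ℝ (Fin d) | 0 < g y} →
      ∑' l : Λ, ENNReal.ofReal (f (x - (l : EuclideanSpace ℝ (Fin d)))) = 1) :
    ∀ᵐ y : EuclideanSpace ℝ (Fin d),
      y ∈ -{x : EuclideanSpace ℝ (Fin d) | 0 < f x} →
      ∑' l : Λ, ENNReal.ofReal (g (y - (l : EuclideanSpace ℝ (Fin d)))) = 1 := by
  have := hΛ.to_subtype
  have lintegral_eq_one {φ : EuclideanSpace ℝ (Fin d) → ℝ} (hφ0 : ∀ x, 0 ≤ φ x)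
      (hφi : Integrable φ) (hφ1 : ∫ x, φ x = 1) : ∫⁻ x, ENNReal.ofReal (φ x) = 1 := by
    rw [← ofReal_integral_eq_lintegral_ofReal hφi (ae_of_all _ hφ0), hφ1, ENNReal.ofReal_one]
  have hf_tile : ∀ᵐ x : EuclideanSpace ℝ (Fin d), ENNReal.ofReal (g (-x)) ≠ 0 →
      periodization (fun l : Λ => (l : EuclideanSpace ℝ (Fin d)))
        (fun x => ENNReal.ofReal (f x)) x = 1 := by
    filter_upwards [h] with x hx hgx
    exact hx (Set.mem_neg.2 (ENNReal.ofReal_pos.1 (pos_iff_ne_zero.2 hgx)))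
  filter_upwards [ae_periodization_eq_one_of_neg_support _ hfi.aemeasurable.ennreal_ofReal
    hgi.aemeasurable.ennreal_ofReal (by simp [lintegral_eq_one hf0 hfi hf1])
    (by rw [lintegral_eq_one hf0 hfi hf1, lintegral_eq_one hg0 hgi hg1]) hpg hf_tile] with y hy hyf
  exact hy (ENNReal.ofReal_pos.2 (Set.mem_neg.1 hyf : 0 < f (-y))).ne'

/-- If `f, g ≥ 0` are integrable with `∫f = ∫g = 1`, both `f + Λ` and `g + Λ` pack `ℝ^d`,
and `f + Λ` tiles `-supp g` (at level 1), then `g + Λ` tiles `-supp f` (at level 1). -/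
theorem tiles_neg_support {d : ℕ}
    (f g : EuclideanSpace ℝ (Fin d) → ℝ)
    (hf0 : ∀ x, 0 ≤ f x) (hg0 : ∀ x, 0 ≤ g x)
    (hfi : Integrable f) (hgi : Integrable g)
    (hf1 : (∫ x, f x) = 1) (hg1 : (∫ x, g x) = 1)
    (Λ : Set (EuclideanSpace ℝ (Fin d))) (hΛ : Λ.Countable)
    (hpf : packs f Λ) (hpg : packs g Λ)
    (h : ∀ᵐ x : EuclideanSpace ℝ (Fin d),
      x ∈ -{y : EuclideanSpace ℝ (Fin d) | 0 < g y} →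
      ∑' l : Λ, ENNReal.ofReal (f (x - (l : EuclideanSpace ℝ (Fin d)))) = 1) :
    ∀ᵐ y : EuclideanSpace ℝ (Fin d),
      y ∈ -{x : EuclideanSpace ℝ (Fin d) | 0 < f x} →
      ∑' l : Λ, ENNReal.ofReal (g (y - (l : EuclideanSpace ℝ (Fin d)))) = 1 :=
  tiles_neg_support_general f g hf0 hg0 hfi hgi hf1 hg1 Λ hΛ hpg h
end
end

section
/- Let Ω ⊆ ℝ^d be a measurable set of Lebesgue measure 1 and Λ ⊆ ℝ^d countable. The family E_Λ = {e_λ : λ ∈ Λ} is an orthonormal basis of L²(Ω) (i.e., Λ is a spectrum of Ω) if and only if ∑_{λ∈Λ} |𝓕1_Ω(x−λ)|² = 1 for every x ∈ ℝ^d, i.e., |𝓕1_Ω|² + Λ is a tiling of ℝ^d at level 1. -/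
open MeasureTheory Real Complex Filter Topology Metric Set Bornology ComplexConjugate
open scoped FourierTransform ENNReal RealInnerProductSpace ContDiff Classical Pointwise

noncomputable section

/-- `Λ` is a spectrum of `Ω`: the exponentials `e_λ`, `λ ∈ Λ`, form an orthonormal
family in `L²(Ω)` which is complete (any `L²(Ω)` function orthogonal to all of them
vanishes a.e.), i.e. an orthonormal basis of `L²(Ω)`. -/
def isSpectrum {d : ℕ} (Ω Λ : Set (EuclideanSpace ℝ (Fin d))) : Prop :=
  (∀ l ∈ Λ, ∀ m ∈ Λ,
    (∫ x in Ω, expChar l x * conj (expChar m x)) = if l = m then 1 else 0) ∧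
  (∀ f : EuclideanSpace ℝ (Fin d) → ℂ, MemLp f 2 (volume.restrict Ω) →
    (∀ l ∈ Λ, (∫ x in Ω, f x * conj (expChar l x)) = 0) → f =ᵐ[volume.restrict Ω] 0)

/-!
The exponentials `e_x`, `x ∈ ℝ^d`, are unit vectors of `L²(Ω)` with
`⟪e_λ, e_x⟫ = 𝓕1_Ω(λ - x)`, and they span a dense subspace because the Fourier transform
is injective on `L¹`. For an orthonormal family `(e_λ)_{λ ∈ Λ}`, completeness is then equivalent
to Parseval's identity `∑_λ |⟪e_λ, e_x⟫|² = ‖e_x‖² = 1` for every `x`, which is the tiling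
condition. Conversely, the tiling condition at `x = λ` already forces orthonormality, since the
`λ`-th term is `|𝓕1_Ω(0)|² = 1`.
-/

theorem MeasureTheory.Integrable.ae_eq_zero_of_fourier_eq_zero {V F : Type*}
    [NormedAddCommGroup V] [InnerProductSpace ℝ V] [FiniteDimensional ℝ V]
    [MeasurableSpace V] [BorelSpace V]
    [NormedAddCommGroup F] [NormedSpace ℂ F] [CompleteSpace F]
    {g : V → F} (hg : Integrable g) (h : 𝓕 g = 0) : g =ᵐ[volume] 0 := by
  refine ae_eq_zero_of_integral_contDiff_smul_eq_zero hg.locallyIntegrable fun φ hφ hφc => ?_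
  let Φ : SchwartzMap V ℂ :=
    (hφc.comp_left ofReal_zero).toSchwartzMap (ofRealCLM.contDiff.comp hφ)
  have hΦ : ∀ x, Φ x = φ x := fun _ => rfl
  calc ∫ x, φ x • g x
    _ = ∫ x, 𝓕 (𝓕⁻ Φ) x • g x := by simp [hΦ]
    _ = ∫ x, 𝓕⁻ Φ x • 𝓕 g x := by
      have := VectorFourier.integral_fourierIntegral_smul_eq_flip (L := innerₗ V) (μ := volume)
        continuous_fourierChar continuous_inner (𝓕⁻ Φ).integrable hg
      rwa [flip_innerₗ] at this
    _ = 0 := by simp [h]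

section HilbertSpace

variable {𝕜 E ι X : Type*} [RCLike 𝕜] [NormedAddCommGroup E] [InnerProductSpace 𝕜 E]

theorem Submodule.mem_orthogonal_span_range_iff {u : X → E} {y : E} :
    y ∈ (Submodule.span 𝕜 (range u))ᗮ ↔ ∀ x, inner 𝕜 (u x) y = 0 := by
  rw [← Submodule.span_singleton_le_iff_mem, ← Submodule.isOrtho_iff_le, Submodule.isOrtho_comm,
    Submodule.isOrtho_span]
  simp

theorem HilbertBasis.tsum_norm_inner_sq (b : HilbertBasis ι 𝕜 E) (x : E) :
    ∑' i, ‖inner 𝕜 (b i) x‖ ^ 2 = ‖x‖ ^ 2 := by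
  have := lp.hasSum_norm (p := 2) (by norm_num) (b.repr x)
  simpa [b.repr_apply_apply] using this.tsum_eq

theorem Orthonormal.tsum_ofReal_norm_inner_sq {v : ι → E} (hv : Orthonormal 𝕜 v) (y : E) :
    ∑' i, ENNReal.ofReal (‖inner 𝕜 (v i) y‖ ^ 2) = ENNReal.ofReal (∑' i, ‖inner 𝕜 (v i) y‖ ^ 2) :=
  (ENNReal.ofReal_tsum_of_nonneg (fun _ => by positivity) (hv.inner_products_summable y)).symm

theorem Orthonormal.mem_orthogonal_orthogonal_of_tsum_eq [CompleteSpace E] {v : ι → E}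
    (hv : Orthonormal 𝕜 v) {y : E} (hy : ∑' i, ‖inner 𝕜 (v i) y‖ ^ 2 = ‖y‖ ^ 2) :
    y ∈ (Submodule.span 𝕜 (range v))ᗮᗮ := by
  set K := Submodule.span 𝕜 (range v)
  -- Only the `Kᗮᗮ`-component `b` of `y` is seen by the `v i`, so Bessel for `b` and Pythagoras
  -- leave no room for the `Kᗮ`-component `a`.
  obtain ⟨a, ha, b, hb, rfl⟩ := Submodule.exists_add_mem_mem_orthogonal (K := Kᗮ) y
  have hva : ∀ i, inner 𝕜 (v i) a = 0 := fun i =>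
    Submodule.inner_right_of_mem_orthogonal (Submodule.subset_span (mem_range_self i)) ha
  have hbessel : ‖a + b‖ ^ 2 ≤ ‖b‖ ^ 2 := by
    simpa [← hy, inner_add_right, hva] using hv.tsum_inner_products_le b
  have hpyth : ‖a + b‖ * ‖a + b‖ = ‖a‖ * ‖a‖ + ‖b‖ * ‖b‖ :=
    norm_add_sq_eq_norm_sq_add_norm_sq_of_inner_eq_zero a b
      (Submodule.inner_right_of_mem_orthogonal ha hb)
  have ha0 : a = 0 := norm_eq_zero.1 (by nlinarith [norm_nonneg a])
  simpa [ha0] using hb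

theorem Orthonormal.orthogonal_span_eq_bot_iff_parseval [CompleteSpace E] {v : ι → E}
    (hv : Orthonormal 𝕜 v) {u : X → E} (hu : (Submodule.span 𝕜 (range u))ᗮ = ⊥) :
    (Submodule.span 𝕜 (range v))ᗮ = ⊥ ↔
      ∀ x, ∑' i, ENNReal.ofReal (‖inner 𝕜 (v i) (u x)‖ ^ 2) = ENNReal.ofReal (‖u x‖ ^ 2) := by
  simp_rw [hv.tsum_ofReal_norm_inner_sq,
    ENNReal.ofReal_eq_ofReal_iff (tsum_nonneg fun _ => sq_nonneg _) (sq_nonneg _)]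
  refine ⟨fun h x => ?_, fun h => ?_⟩
  · simpa using (HilbertBasis.mkOfOrthogonalEqBot hv h).tsum_norm_inner_sq (u x)
  · have hle : Submodule.span 𝕜 (range u) ≤ (Submodule.span 𝕜 (range v))ᗮᗮ :=
      Submodule.span_le.2 <| range_subset_iff.2 fun x =>
        hv.mem_orthogonal_orthogonal_of_tsum_eq (h x)
    rw [← Submodule.triorthogonal_eq_orthogonal, eq_bot_iff, ← hu]
    exact Submodule.orthogonal_le hle

theorem orthonormal_of_tsum_ofReal_norm_inner_sq_le {v : ι → E} (hv : ∀ i, ‖v i‖ = 1)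
    (h : ∀ j, ∑' i, ENNReal.ofReal (‖inner 𝕜 (v i) (v j)‖ ^ 2) ≤ 1) : Orthonormal 𝕜 v := by
  refine ⟨hv, fun i j hij => ?_⟩
  have hjj : ENNReal.ofReal (‖inner 𝕜 (v j) (v j)‖ ^ 2) = 1 := by
    simp [inner_self_eq_norm_sq_to_K, hv]
  have hpair := (ENNReal.sum_le_tsum {j, i}).trans (h j)
  rw [Finset.sum_pair hij.symm, hjj] at hpair
  simpa using ENNReal.le_of_add_le_add_left ENNReal.one_ne_top (hpair.trans_eq (add_zero 1).symm)

end HilbertSpace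

section Exponentials

variable {d : ℕ}

theorem expChar_add (a b x : EuclideanSpace ℝ (Fin d)) :
    expChar (a + b) x = expChar a x * expChar b x := by
  rw [expChar, expChar, expChar, ← Complex.exp_add, inner_add_left]
  push_cast
  ring_nf

theorem conj_expChar (a x : EuclideanSpace ℝ (Fin d)) : conj (expChar a x) = expChar (-a) x := by
  rw [expChar, expChar, ← Complex.exp_conj, inner_neg_left]
  simp [map_ofNat]

theorem norm_expChar (a x : EuclideanSpace ℝ (Fin d)) : ‖expChar a x‖ = 1 := by
  simp [expChar, Complex.norm_exp]

theorem continuous_expChar (a : EuclideanSpace ℝ (Fin d)) : Continuous (expChar a) := by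
  unfold expChar
  fun_prop

theorem fourierChar_neg_inner_eq_conj_expChar (x ξ : EuclideanSpace ℝ (Fin d)) :
    (𝐞 (-⟪x, ξ⟫) : ℂ) = conj (expChar ξ x) := by
  rw [Real.fourierChar_apply, conj_expChar, expChar, inner_neg_left, real_inner_comm]

theorem fourier_indicator_eq_setIntegral {Ω : Set (EuclideanSpace ℝ (Fin d))}
    (hΩ : MeasurableSet Ω) (f : EuclideanSpace ℝ (Fin d) → ℂ) (ξ : EuclideanSpace ℝ (Fin d)) :
    𝓕 (Ω.indicator f) ξ = ∫ x in Ω, f x * conj (expChar ξ x) := by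
  rw [Real.fourier_eq, ← integral_indicator hΩ]
  congr 1 with x
  by_cases hx : x ∈ Ω <;>
    simp [hx, Circle.smul_def, fourierChar_neg_inner_eq_conj_expChar, mul_comm]

end Exponentials

section L2

variable {d : ℕ} (μ : Measure (EuclideanSpace ℝ (Fin d))) [IsFiniteMeasure μ]

theorem memLp_expChar (t : EuclideanSpace ℝ (Fin d)) : MemLp (expChar t) 2 μ :=
  MemLp.of_bound (continuous_expChar t).aestronglyMeasurable 1
    (Eventually.of_forall fun x => (norm_expChar t x).le)

def expLp (t : EuclideanSpace ℝ (Fin d)) : Lp ℂ 2 μ :=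
  (memLp_expChar μ t).toLp (expChar t)

variable {μ}

theorem inner_expLp_left (t : EuclideanSpace ℝ (Fin d)) (F : Lp ℂ 2 μ) :
    inner ℂ (expLp μ t) F = ∫ x, F x * conj (expChar t x) ∂μ := by
  rw [L2.inner_def]
  refine integral_congr_ae ?_
  filter_upwards [(memLp_expChar μ t).coeFn_toLp] with x hx
  rw [RCLike.inner_apply, expLp, hx, mul_comm]

theorem inner_expLp (a b : EuclideanSpace ℝ (Fin d)) :
    inner ℂ (expLp μ a) (expLp μ b) = ∫ x, expChar b x * conj (expChar a x) ∂μ := by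
  rw [inner_expLp_left]
  refine integral_congr_ae ?_
  filter_upwards [(memLp_expChar μ b).coeFn_toLp] with x hx
  rw [expLp, hx]

theorem norm_expLp [IsProbabilityMeasure μ] (t : EuclideanSpace ℝ (Fin d)) :
    ‖expLp μ t‖ = 1 := by
  rw [expLp, Lp.norm_toLp, eLpNorm_congr_norm_ae (g := fun _ => (1 : ℂ))
    (Eventually.of_forall fun x => by simp [norm_expChar]),
    eLpNorm_const _ two_ne_zero (IsProbabilityMeasure.ne_zero μ)]
  simp

theorem orthonormal_expLp_iff {Λ : Set (EuclideanSpace ℝ (Fin d))} :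
    Orthonormal ℂ (fun l : Λ => expLp μ l) ↔
      ∀ l ∈ Λ, ∀ m ∈ Λ, ∫ x, expChar l x * conj (expChar m x) ∂μ = if l = m then 1 else 0 := by
  simp_rw [orthonormal_iff_ite, inner_expLp, Subtype.forall, Subtype.mk.injEq]
  exact ⟨fun h l hl m hm => by simpa [eq_comm] using h m hm l hl,
    fun h l hl m hm => by simpa [eq_comm] using h m hm l hl⟩

theorem orthogonal_span_expLp_eq_bot_iff {Λ : Set (EuclideanSpace ℝ (Fin d))} :
    (Submodule.span ℂ (range fun l : Λ => expLp μ l))ᗮ = ⊥ ↔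
      ∀ f : EuclideanSpace ℝ (Fin d) → ℂ, MemLp f 2 μ →
        (∀ l ∈ Λ, ∫ x, f x * conj (expChar l x) ∂μ = 0) → f =ᵐ[μ] 0 := by
  simp_rw [Submodule.eq_bot_iff, Submodule.mem_orthogonal_span_range_iff, inner_expLp_left]
  refine ⟨fun h f hf hf0 => ?_, fun h F hF =>
    Lp.eq_zero_iff_ae_eq_zero.2 (h F (Lp.memLp F) fun l hl => hF ⟨l, hl⟩)⟩
  have hF0 : hf.toLp f = 0 := h _ fun l => by
    rw [← hf0 l l.2]
    refine integral_congr_ae ?_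
    filter_upwards [hf.coeFn_toLp] with x hx
    rw [hx]
  exact hf.coeFn_toLp.symm.trans (Lp.eq_zero_iff_ae_eq_zero.1 hF0)

end L2

section Domain

variable {d : ℕ} {Ω : Set (EuclideanSpace ℝ (Fin d))}

theorem inner_expLp_restrict (hΩ : MeasurableSet Ω) [IsFiniteMeasure (volume.restrict Ω)]
    (a b : EuclideanSpace ℝ (Fin d)) :
    inner ℂ (expLp (volume.restrict Ω) a) (expLp _ b) = ftInd Ω (a - b) := by
  rw [inner_expLp, ftInd, fourier_indicator_eq_setIntegral hΩ]
  congr 1 with x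
  rw [conj_expChar, conj_expChar, ← expChar_add, one_mul, neg_sub, sub_eq_add_neg]

theorem orthogonal_span_range_expLp_eq_bot (hΩ : MeasurableSet Ω)
    [IsFiniteMeasure (volume.restrict Ω)] :
    (Submodule.span ℂ (range (expLp (volume.restrict Ω))))ᗮ = ⊥ := by
  refine (Submodule.eq_bot_iff _).2 fun F hF => ?_
  rw [Submodule.mem_orthogonal_span_range_iff] at hF
  have hint : Integrable (Ω.indicator F) :=
    (integrable_indicator_iff hΩ).2 ((Lp.memLp F).integrable one_le_two)
  have hfourier : 𝓕 (Ω.indicator F) = 0 := funext fun ξ => by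
    rw [fourier_indicator_eq_setIntegral hΩ, ← inner_expLp_left, hF, Pi.zero_apply]
  rw [Lp.eq_zero_iff_ae_eq_zero]
  exact (indicator_ae_eq_restrict hΩ).symm.trans
    (ae_restrict_of_ae (hint.ae_eq_zero_of_fourier_eq_zero hfourier))

end Domain

theorem spectrum_iff_tiling_general {d : ℕ} (Ω : Set (EuclideanSpace ℝ (Fin d)))
    (hΩm : MeasurableSet Ω) (hΩ1 : volume Ω = 1)
    (Λ : Set (EuclideanSpace ℝ (Fin d))) :
    isSpectrum Ω Λ ↔
    (∀ x : EuclideanSpace ℝ (Fin d),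
      ∑' l : Λ, ENNReal.ofReal (‖ftInd Ω (x - (l : EuclideanSpace ℝ (Fin d)))‖ ^ 2) = 1) := by
  have : IsProbabilityMeasure (volume.restrict Ω) := ⟨by simp [hΩ1]⟩
  set e := expLp (volume.restrict Ω)
  have hu := orthogonal_span_range_expLp_eq_bot hΩm
  have hnorm : ∀ x, ‖e x‖ = 1 := norm_expLp
  have hnorm_sq : ∀ x, ENNReal.ofReal (‖e x‖ ^ 2) = 1 := by simp [hnorm]
  have htile : ∀ x, ∑' l : Λ, ENNReal.ofReal (‖ftInd Ω (x - l)‖ ^ 2) =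
      ∑' l : Λ, ENNReal.ofReal (‖inner ℂ (e l) (e x)‖ ^ 2) := fun x => by
    simp_rw [norm_inner_symm (e _) (e x), e, inner_expLp_restrict hΩm]
  simp_rw [htile]
  rw [isSpectrum, ← orthonormal_expLp_iff, ← orthogonal_span_expLp_eq_bot_iff]
  refine ⟨fun ⟨hON, hcomplete⟩ x => ?_, fun hT => ?_⟩
  · exact ((hON.orthogonal_span_eq_bot_iff_parseval hu).1 hcomplete x).trans (hnorm_sq x)
  · have hON : Orthonormal ℂ fun l : Λ => e l :=
      orthonormal_of_tsum_ofReal_norm_inner_sq_le (fun _ => hnorm _) fun l => (hT l).le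
    exact ⟨hON, (hON.orthogonal_span_eq_bot_iff_parseval hu).2 fun x =>
      (hT x).trans (hnorm_sq x).symm⟩

/-- `Λ` is a spectrum of `Ω` (the exponentials `E_Λ` form an orthonormal basis of `L²(Ω)`)
if and only if `∑_{λ∈Λ} |𝓕1_Ω(x-λ)|² = 1` for every `x`, i.e. `|𝓕1_Ω|² + Λ` tiles `ℝ^d`
at level 1. -/
theorem spectrum_iff_tiling {d : ℕ} (Ω : Set (EuclideanSpace ℝ (Fin d)))
    (hΩm : MeasurableSet Ω) (hΩ1 : volume Ω = 1)
    (Λ : Set (EuclideanSpace ℝ (Fin d))) (hΛ : Λ.Countable) :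
    isSpectrum Ω Λ ↔
    (∀ x : EuclideanSpace ℝ (Fin d),
      ∑' l : Λ, ENNReal.ofReal (‖ftInd Ω (x - (l : EuclideanSpace ℝ (Fin d)))‖ ^ 2) = 1) :=
  spectrum_iff_tiling_general Ω hΩm hΩ1 Λ
end
end

section
/- Let Ω ⊆ ℝ^d be measurable of measure 1, let D ⊆ ℝ^d be an open orthogonal packing region for Ω, and let Λ ⊆ ℝ^d be countable such that the exponentials E_Λ = {e_λ : λ ∈ Λ} are pairwise orthogonal in L²(Ω). Then D + Λ is a packing of ℝ^d; in fact (Λ−Λ) ∩ (D−D) = {0}, so the translates D+λ, λ ∈ Λ, are pairwise disjoint. -/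
open MeasureTheory Real Complex Filter Topology Metric Set Bornology ComplexConjugate
open scoped FourierTransform ENNReal RealInnerProductSpace ContDiff Classical Pointwise

noncomputable section

/-! For distinct `λ, μ ∈ Λ` the inner product `⟨e_λ, e_μ⟩` in `L²(Ω)` is `conj (𝓕1_Ω(λ - μ))`,
so orthogonality puts `λ - μ` in the zero set of `𝓕1_Ω`, which misses `D - D`. Hence no nonzero
difference of `Λ` is a difference of `D`, the translates `D + λ` are pairwise disjoint, and at
every point at most one of the indicators `1_D(x - λ)` is nonzero. -/

theorem Set.sub_inter_sub_subset_zero_of_pairwise {G : Type*} [AddGroup G] {Λ D : Set G}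
    (h : Λ.Pairwise fun l m => l - m ∉ D - D) : (Λ - Λ) ∩ (D - D) ⊆ {0} := by
  rintro _ ⟨⟨l, hl, m, hm, rfl⟩, hlm⟩
  by_contra hne
  exact h hl hm (fun hlm' => hne (sub_eq_zero.mpr hlm')) hlm

theorem Set.pairwise_disjoint_image_add_of_sub_inter_sub_subset_zero {G : Type*}
    [AddCommGroup G] {Λ D : Set G} (h : (Λ - Λ) ∩ (D - D) ⊆ {0}) :
    Λ.Pairwise fun l m => Disjoint ((l + ·) '' D) ((m + ·) '' D) := by
  intro l hl m hm hne
  rw [Set.disjoint_left]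
  rintro _ ⟨a, ha, rfl⟩ ⟨b, hb, hba⟩
  have hlm : l - m = b - a := by
    rw [sub_eq_sub_iff_add_eq_add, add_comm b]
    exact hba.symm
  exact hne (sub_eq_zero.mp (h ⟨sub_mem_sub hl hm, hlm ▸ sub_mem_sub hb ha⟩))

theorem tsum_indicator_one_le_one_of_pairwise_disjoint {ι α : Type*} {s : ι → Set α}
    (h : Pairwise (Function.onFun Disjoint s)) (x : α) :
    ∑' i, (s i).indicator (1 : α → ℝ≥0∞) x ≤ 1 := by
  by_cases hx : ∃ i, x ∈ s i
  · obtain ⟨i, hi⟩ := hx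
    have hothers : ∀ j ≠ i, (s j).indicator (1 : α → ℝ≥0∞) x = 0 := fun j hj =>
      Set.indicator_of_notMem (Set.disjoint_left.mp (h hj).symm hi) _
    rw [tsum_eq_single i hothers]
    exact Set.indicator_le_self' (fun _ _ => zero_le_one) x
  · simp only [not_exists] at hx
    simp [Set.indicator_of_notMem (hx _)]

theorem packs_indicator_of_pairwise_disjoint_image_add {d : ℕ}
    {D Λ : Set (EuclideanSpace ℝ (Fin d))}
    (h : Λ.Pairwise fun l m => Disjoint ((l + ·) '' D) ((m + ·) '' D)) :
    packs (D.indicator fun _ => (1 : ℝ)) Λ := by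
  refine Filter.Eventually.of_forall fun x => ?_
  have hdisj :
      Pairwise (Function.onFun Disjoint fun l : Λ => ((l : EuclideanSpace ℝ (Fin d)) + ·) '' D) :=
    fun l m hne => h l.2 m.2 (Subtype.coe_injective.ne hne)
  convert tsum_indicator_one_le_one_of_pairwise_disjoint hdisj x using 3 with l
  simp only [Set.indicator_apply, Set.image_add_left, Set.mem_preimage, neg_add_eq_sub]
  split_ifs <;> simp

theorem expChar_mul_conj_expChar {d : ℕ} (l m x : EuclideanSpace ℝ (Fin d)) :
    expChar l x * conj (expChar m x) = expChar (l - m) x := by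
  simp only [expChar, ← Complex.exp_conj, ← Complex.exp_add]
  congr 1
  simp [Complex.ext_iff, inner_sub_left]
  ring

theorem conj_ftInd {d : ℕ} {Ω : Set (EuclideanSpace ℝ (Fin d))} (hΩ : MeasurableSet Ω)
    (ξ : EuclideanSpace ℝ (Fin d)) : conj (ftInd Ω ξ) = ∫ x in Ω, expChar ξ x := by
  rw [ftInd, Real.fourier_eq', ← integral_conj, ← integral_indicator hΩ]
  congr 1
  funext x
  by_cases hx : x ∈ Ω
  · simp only [Set.indicator_of_mem hx, smul_eq_mul, mul_one, ← Complex.exp_conj, expChar]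
    congr 1
    simp [Complex.ext_iff, real_inner_comm x ξ]
  · simp [Set.indicator_of_notMem hx]

theorem ftInd_sub_eq_zero_of_orthogonal {d : ℕ} {Ω : Set (EuclideanSpace ℝ (Fin d))}
    (hΩ : MeasurableSet Ω) {l m : EuclideanSpace ℝ (Fin d)}
    (h : ∫ x in Ω, expChar l x * conj (expChar m x) = 0) : ftInd Ω (l - m) = 0 := by
  simpa only [expChar_mul_conj_expChar, ← conj_ftInd hΩ, map_eq_zero] using h

theorem packing_region_packs_general {d : ℕ} (Ω D : Set (EuclideanSpace ℝ (Fin d)))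
    (hΩm : MeasurableSet Ω)
    (hopr : (D - D) ∩ {ξ | ftInd Ω ξ = 0} = ∅)
    (Λ : Set (EuclideanSpace ℝ (Fin d)))
    (horth : ∀ l ∈ Λ, ∀ m ∈ Λ, l ≠ m →
      (∫ x in Ω, expChar l x * conj (expChar m x)) = 0) :
    packs (D.indicator fun _ => (1 : ℝ)) Λ ∧
    (Λ - Λ) ∩ (D - D) ⊆ {0} ∧
    (∀ l ∈ Λ, ∀ m ∈ Λ, l ≠ m →
      Disjoint ((fun x => l + x) '' D) ((fun x => m + x) '' D)) := by
  have hsub : (Λ - Λ) ∩ (D - D) ⊆ {0} :=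
    Set.sub_inter_sub_subset_zero_of_pairwise fun l hl m hm hne hlm =>
      hopr.subset ⟨hlm, ftInd_sub_eq_zero_of_orthogonal hΩm (horth l hl m hm hne)⟩
  have hdisj := Set.pairwise_disjoint_image_add_of_sub_inter_sub_subset_zero hsub
  exact ⟨packs_indicator_of_pairwise_disjoint_image_add hdisj, hsub, hdisj⟩

/-- If `D` is an open orthogonal packing region for `Ω` (that is,
`(D-D) ∩ Z(𝓕1_Ω) = ∅`) and the exponentials `e_λ`, `λ ∈ Λ`, are pairwise orthogonal
in `L²(Ω)`, then `D + Λ` is a packing of `ℝ^d`; in fact `(Λ-Λ) ∩ (D-D)` contains only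
`0`, so the translates `D + λ`, `λ ∈ Λ`, are pairwise disjoint. -/
theorem packing_region_packs {d : ℕ} (Ω D : Set (EuclideanSpace ℝ (Fin d)))
    (hΩm : MeasurableSet Ω) (hΩ1 : volume Ω = 1)
    (hD : IsOpen D)
    (hopr : (D - D) ∩ {ξ | ftInd Ω ξ = 0} = ∅)
    (Λ : Set (EuclideanSpace ℝ (Fin d))) (hΛ : Λ.Countable)
    (horth : ∀ l ∈ Λ, ∀ m ∈ Λ, l ≠ m →
      (∫ x in Ω, expChar l x * conj (expChar m x)) = 0) :
    packs (D.indicator fun _ => (1 : ℝ)) Λ ∧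
    (Λ - Λ) ∩ (D - D) ⊆ {0} ∧
    (∀ l ∈ Λ, ∀ m ∈ Λ, l ≠ m →
      Disjoint ((fun x => l + x) '' D) ((fun x => m + x) '' D)) :=
  packing_region_packs_general Ω D hΩm hopr Λ horth
end
end
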